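/- arXiv:2303.15385 — 3 statements merged into one kernel-verified Lean document; each statement's English description precedes it below -/
import Mathlib

section
/- The two point clouds T = {(1,1), (-1,1), (-2,0), (2,0)} and K = {(0,1), (-1,0), (0,-1), (3,0)} in the Euclidean plane have the same multiset of six pairwise distances {√2, √2, 2, √10, √10, 4}, yet there is no isometry of the plane mapping T onto K. -/
/-!
Call a set `S` *forked at distance `d`* if some point of `S` has two distinct points of `S` at
distance `d` from it. Isometries preserve this property. In `K` the point `(-1,0)` is at distance
`√2` from both `(0,1)` and `(0,-1)`, whereas the two `√2`-pairs of `T`, namely `{(1,1),(2,0)}` and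
`{(-1,1),(-2,0)}`, are disjoint. Hence no isometry maps `T` onto `K`.
-/

noncomputable abbrev E2 := EuclideanSpace ℝ (Fin 2)
noncomputable def pt (x y : ℝ) : E2 := (WithLp.equiv 2 (Fin 2 → ℝ)).symm ![x, y]

theorem dist_pt (a b c d : ℝ) : dist (pt a b) (pt c d) = √((a - c) ^ 2 + (b - d) ^ 2) := by
  simp [pt, EuclideanSpace.dist_eq, Fin.sum_univ_two, Real.dist_eq, sq_abs]

theorem dist_pt_eq_sqrt_iff {a b c d k : ℝ} (hk : 0 ≤ k) :
    dist (pt a b) (pt c d) = √k ↔ (a - c) ^ 2 + (b - d) ^ 2 = k := by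
  rw [dist_pt, Real.sqrt_inj (by positivity) hk]

def IsForkedAt {X : Type*} [PseudoMetricSpace X] (S : Set X) (d : ℝ) : Prop :=
  ∃ p ∈ S, ∃ q ∈ S, ∃ r ∈ S, q ≠ r ∧ dist p q = d ∧ dist p r = d

theorem IsForkedAt.of_image {X Y : Type*} [PseudoMetricSpace X] [PseudoMetricSpace Y]
    {f : X → Y} (hf : Isometry f) {S : Set X} {d : ℝ} (h : IsForkedAt (f '' S) d) :
    IsForkedAt S d := by
  obtain ⟨-, ⟨p, hp, rfl⟩, -, ⟨q, hq, rfl⟩, -, ⟨r, hr, rfl⟩, hqr, hpq, hpr⟩ := h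
  exact ⟨p, hp, q, hq, r, hr, ne_of_apply_ne f hqr, hf.dist_eq p q ▸ hpq, hf.dist_eq p r ▸ hpr⟩

theorem isForkedAt_K : IsForkedAt ({pt 0 1, pt (-1) 0, pt 0 (-1), pt 3 0} : Set E2) √2 := by
  refine ⟨pt (-1) 0, by simp, pt 0 1, by simp, pt 0 (-1), by simp, ?_, ?_, ?_⟩
  · intro h
    have h₁ := congrArg (· 1) h
    norm_num [pt] at h₁
  · rw [dist_pt_eq_sqrt_iff zero_le_two]; norm_num
  · rw [dist_pt_eq_sqrt_iff zero_le_two]; norm_num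

theorem not_isForkedAt_T : ¬ IsForkedAt ({pt 1 1, pt (-1) 1, pt (-2) 0, pt 2 0} : Set E2) √2 := by
  rintro ⟨p, hp, q, hq, r, hr, hqr, hpq, hpr⟩
  simp only [Set.mem_insert_iff, Set.mem_singleton_iff] at hp hq hr
  rcases hp with rfl | rfl | rfl | rfl <;> rcases hq with rfl | rfl | rfl | rfl <;>
    rcases hr with rfl | rfl | rfl | rfl <;>
    rw [dist_pt_eq_sqrt_iff zero_le_two] at hpq hpr <;> norm_num at *

/-- The clouds T = {(1,1),(-1,1),(-2,0),(2,0)} and K = {(0,1),(-1,0),(0,-1),(3,0)}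
have the same multiset of six pairwise distances {√2,√2,2,√10,√10,4}, yet no
isometry of the plane maps T onto K. -/
theorem stmt0 :
    ({dist (pt 1 1) (pt (-1) 1), dist (pt 1 1) (pt (-2) 0), dist (pt 1 1) (pt 2 0),
      dist (pt (-1) 1) (pt (-2) 0), dist (pt (-1) 1) (pt 2 0),
      dist (pt (-2) 0) (pt 2 0)} : Multiset ℝ)
      = {Real.sqrt 2, Real.sqrt 2, 2, Real.sqrt 10, Real.sqrt 10, 4} ∧
    ({dist (pt 0 1) (pt (-1) 0), dist (pt 0 1) (pt 0 (-1)), dist (pt 0 1) (pt 3 0),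
      dist (pt (-1) 0) (pt 0 (-1)), dist (pt (-1) 0) (pt 3 0),
      dist (pt 0 (-1)) (pt 3 0)} : Multiset ℝ)
      = {Real.sqrt 2, Real.sqrt 2, 2, Real.sqrt 10, Real.sqrt 10, 4} ∧
    ¬ ∃ f : E2 ≃ᵢ E2,
        f '' ({pt 1 1, pt (-1) 1, pt (-2) 0, pt 2 0} : Set E2)
          = ({pt 0 1, pt (-1) 0, pt 0 (-1), pt 3 0} : Set E2) := by
  refine ⟨?_, ?_, ?_⟩
  · norm_num [dist_pt]
    simp only [← Multiset.cons_zero, Multiset.cons_swap]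
  · norm_num [dist_pt]
    simp only [← Multiset.cons_zero, Multiset.cons_swap]
  · rintro ⟨f, hf⟩
    exact not_isForkedAt_T (.of_image f.isometry (hf ▸ isForkedAt_K))
end

section
/- Define for two h-point ordered tuples A ⊂ C and A' ⊂ C' in m-point clouds the quantity M∞ = min over permutations ξ ∈ S_h of max{L∞(ξ(D(A)), D(A')), W∞(ξ(R(C;A)), R(C';A'))}. Then M∞ satisfies the symmetry and triangle inequality axioms of a metric on Relative Distance Distributions, and M∞ = 0 if and only if RDD(C;A) = RDD(C';A'). -/
/-- `L∞` distance between two h×h matrices: the maximum absolute difference of entries. -/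
noncomputable def Linf {h : ℕ} (D D' : Fin h → Fin h → ℝ) : ℝ :=
  ⨆ i, ⨆ j, |D i j - D' i j|

/-- Bottleneck distance `W∞` between two collections of k columns (unlabeled points of ℝ^h
with the ℓ∞ norm; the sup metric on `Fin h → ℝ` is the ℓ∞ metric): the infimum over
bijections of the largest ℓ∞ distance between matched columns. -/
noncomputable def Winf {k h : ℕ} (R R' : Fin k → Fin h → ℝ) : ℝ :=
  ⨅ g : Equiv.Perm (Fin k), ⨆ j, dist (R j) (R' (g j))

/-- The max metric `M∞` on Relative Distance Distributions: the minimum over permutations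
ξ of the h points of A of the larger of `L∞(ξ(D), D')` and `W∞(ξ(R), R')`, where ξ acts on
D by permuting indices and on R by permuting the rows of each column. -/
noncomputable def Minf {h k : ℕ} (D D' : Fin h → Fin h → ℝ) (R R' : Fin k → Fin h → ℝ) : ℝ :=
  ⨅ ξ : Equiv.Perm (Fin h),
    max (Linf (fun i j => D (ξ i) (ξ j)) D') (Winf (fun c => R c ∘ ξ) R')

/-!
The pairs `(D, R)` form a sup-metric space on which `S_h × S_k` acts by isometries
(relabelling the points of `A` and the columns of `R`), and the maximum in `M∞` is the
product sup metric. Since a maximum commutes with a finite minimum, `M∞` is the minimum of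
`dist (p • (D, R)) (D', R')` over this finite group, the distance between two orbits. Such an
orbit distance is symmetric (replace `p` by `p⁻¹`), satisfies the triangle inequality (compose
the two minimisers), and vanishes exactly when the minimum is attained at distance `0`, i.e.
when the two points lie in one orbit.
-/

open Equiv

section OrbitDist

variable (G : Type*) {X : Type*} [Group G] [PseudoMetricSpace X] [MulAction G X]

noncomputable def orbitDist (x y : X) : ℝ :=
  ⨅ a : G, dist (a • x) y

variable {G}

lemma orbitDist_nonneg (x y : X) : 0 ≤ orbitDist G x y :=
  Real.iInf_nonneg fun _ => dist_nonneg

lemma orbitDist_le_dist_smul (a : G) (x y : X) : orbitDist G x y ≤ dist (a • x) y :=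
  ciInf_le ⟨0, Set.forall_mem_range.2 fun _ => dist_nonneg⟩ a

lemma orbitDist_comm [IsIsometricSMul G X] (x y : X) : orbitDist G x y = orbitDist G y x := by
  rw [orbitDist, ← (Equiv.inv G).iInf_comp]
  refine iInf_congr fun a => ?_
  show dist (a⁻¹ • x) y = dist (a • y) x
  rw [← dist_smul a, smul_inv_smul, dist_comm]

lemma orbitDist_triangle [IsIsometricSMul G X] (x y z : X) :
    orbitDist G x z ≤ orbitDist G x y + orbitDist G y z :=
  le_ciInf_add_ciInf fun a b => calc
    orbitDist G x z ≤ dist ((b * a) • x) z := orbitDist_le_dist_smul _ _ _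
    _ ≤ dist ((b * a) • x) (b • y) + dist (b • y) z := dist_triangle _ _ _
    _ = dist (a • x) y + dist (b • y) z := by rw [mul_smul, dist_smul]

lemma orbitDist_eq_zero_iff {X : Type*} [MetricSpace X] [MulAction G X] [Finite G] {x y : X} :
    orbitDist G x y = 0 ↔ ∃ a : G, a • x = y := by
  constructor
  · intro h0
    obtain ⟨a, ha⟩ : ∃ a : G, dist (a • x) y = orbitDist G x y := exists_eq_ciInf_of_finite
    exact ⟨a, dist_eq_zero.1 (ha.trans h0)⟩
  · rintro ⟨a, rfl⟩
    exact le_antisymm (by simpa using orbitDist_le_dist_smul a x (a • x)) (orbitDist_nonneg _ _)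

end OrbitDist

section SupDist

variable {ι κ ι' α : Type*} [Fintype ι] [Fintype κ] [Fintype ι'] [PseudoMetricSpace α]

lemma dist_pi_eq_iSup (f g : ι → α) : dist f g = ⨆ i, dist (f i) (g i) :=
  le_antisymm ((dist_pi_le_iff (Real.iSup_nonneg fun _ => dist_nonneg)).2 (Finite.le_ciSup _))
    (Real.iSup_le (dist_le_pi_dist f g) dist_nonneg)

lemma dist_comp_equiv (e : κ ≃ ι) (f g : ι → α) : dist (f ∘ e) (g ∘ e) = dist f g := by
  simp only [dist_pi_eq_iSup, Function.comp_apply]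
  exact e.iSup_comp (g := fun i => dist (f i) (g i))

lemma dist_comp_equiv_pi (e : κ ≃ ι) (F G : ι' → ι → α) :
    dist (fun c => F c ∘ e) (fun c => G c ∘ e) = dist F G := by
  simp only [dist_pi_eq_iSup (fun c => F c ∘ e), dist_comp_equiv, ← dist_pi_eq_iSup]

lemma dist_conj_equiv (e : κ ≃ ι) (D D' : ι → ι → α) :
    dist (fun i j => D (e i) (e j)) (fun i j => D' (e i) (e j)) = dist D D' :=
  (dist_comp_equiv_pi e (D ∘ e) (D' ∘ e)).trans (dist_comp_equiv e D D')

end SupDist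

abbrev RDD (ι κ : Type*) := (ι → ι → ℝ) × (κ → ι → ℝ)

namespace RDD

variable {ι κ : Type*}

-- `p.1` relabels the points of `A` and `p.2` the columns; the inverses make this a left action.
instance : MulAction (Perm ι × Perm κ) (RDD ι κ) where
  smul p x := (fun i j => x.1 ((p.1⁻¹ : Perm ι) i) ((p.1⁻¹ : Perm ι) j),
      fun c => x.2 ((p.2⁻¹ : Perm κ) c) ∘ (p.1⁻¹ : Perm ι))
  one_smul _ := rfl
  mul_smul _ _ _ := rfl

lemma smul_def (p : Perm ι × Perm κ) (x : RDD ι κ) :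
    p • x = (fun i j => x.1 ((p.1⁻¹ : Perm ι) i) ((p.1⁻¹ : Perm ι) j),
      fun c => x.2 ((p.2⁻¹ : Perm κ) c) ∘ (p.1⁻¹ : Perm ι)) :=
  rfl

instance [Fintype ι] [Fintype κ] : IsIsometricSMul (Perm ι × Perm κ) (RDD ι κ) :=
  ⟨fun p => Isometry.of_dist_eq fun x y => by
    rw [Prod.dist_eq, Prod.dist_eq]
    exact congrArg₂ max (dist_conj_equiv p.1⁻¹ x.1 y.1)
      ((dist_comp_equiv_pi p.1⁻¹ (x.2 ∘ ⇑p.2⁻¹) (y.2 ∘ ⇑p.2⁻¹)).trans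
        (dist_comp_equiv _ _ _))⟩

lemma exists_smul_eq_iff {x y : RDD ι κ} :
    (∃ p : Perm ι × Perm κ, p • x = y) ↔
      ∃ ξ : Perm ι, (∀ i j, y.1 i j = x.1 (ξ i) (ξ j)) ∧
        ∃ g : Perm κ, ∀ c, y.2 (g c) = x.2 c ∘ ξ := by
  constructor
  · rintro ⟨⟨σ, τ⟩, rfl⟩
    exact ⟨σ⁻¹, fun _ _ => rfl, τ, fun c => by simp [smul_def]⟩
  · rintro ⟨ξ, hD, g, hR⟩
    refine ⟨(ξ⁻¹, g), Prod.ext (funext₂ fun i j => ?_) (funext fun c => ?_)⟩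
    · simp [smul_def, hD]
    · simpa [smul_def] using (hR (g⁻¹ c)).symm

end RDD

lemma Linf_eq_dist {h : ℕ} (D D' : Fin h → Fin h → ℝ) : Linf D D' = dist D D' := by
  simp only [Linf, dist_pi_eq_iSup, Real.dist_eq]

lemma Winf_eq_iInf_dist {k h : ℕ} (R R' : Fin k → Fin h → ℝ) :
    Winf R R' = ⨅ g : Perm (Fin k), dist (R ∘ ⇑g⁻¹) R' := by
  refine iInf_congr fun g => ?_
  rw [← dist_comp_equiv g, dist_pi_eq_iSup]
  simp

lemma Minf_eq_orbitDist {h k : ℕ} (D D' : Fin h → Fin h → ℝ) (R R' : Fin k → Fin h → ℝ) :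
    Minf D D' R R' =
      orbitDist (Perm (Fin h) × Perm (Fin k)) ((D, R) : RDD (Fin h) (Fin k)) (D', R') := by
  rw [orbitDist, Finite.ciInf_prod, Minf, ← (Equiv.inv _).iInf_comp]
  refine iInf_congr fun ξ => ?_
  rw [Linf_eq_dist, Winf_eq_iInf_dist,
    Finite.map_iInf_of_monotone (g := max _) _ fun _ _ => max_le_max_left _]
  refine iInf_congr fun g => ?_
  rw [Prod.dist_eq]
  rfl

/-- `M∞` satisfies symmetry and the triangle inequality on Relative Distance
Distributions (pairs [D,R] of a triangular distance matrix and a matrix of columns),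
and `M∞ = 0` if and only if the two RDDs are equal, i.e. the pairs [D,R] and [D',R']
are related by a permutation ξ of the h points together with a bijection of columns. -/
theorem stmt7 {h k : ℕ} (D D' D'' : Fin h → Fin h → ℝ) (R R' R'' : Fin k → Fin h → ℝ) :
    Minf D D' R R' = Minf D' D R' R ∧
    Minf D D'' R R'' ≤ Minf D D' R R' + Minf D' D'' R' R'' ∧
    (Minf D D' R R' = 0 ↔
      ∃ ξ : Equiv.Perm (Fin h), (∀ i j, D' i j = D (ξ i) (ξ j)) ∧
        ∃ g : Equiv.Perm (Fin k), ∀ c, R' (g c) = R c ∘ ξ) := by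
  simp only [Minf_eq_orbitDist]
  exact ⟨orbitDist_comm _ _, orbitDist_triangle _ _ _,
    orbitDist_eq_zero_iff.trans RDD.exists_smul_eq_iff⟩
end

section
/- Let C' be obtained from an m-point cloud C in a metric space by perturbing each point within its ε-neighborhood. Then for any 1 ≤ h < m, the matrices D and R of corresponding subsets satisfy: for the induced bijection between h-point subsets A ⊂ C and A' ⊂ C', every entry of D(A') differs from the corresponding entry of D(A) by at most 2ε, and the bottleneck distance between the column sets of R(C;A) and R(C';A') is at most 2ε; hence M∞(RDD(C;A), RDD(C';A')) ≤ 2ε. -/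
/-!
By the triangle inequality every pairwise distance moves by at most `2ε` under the
perturbation, so each entry of `D` and of `R` does. The identity matching of the
columns of `R` with those of `R'`, and the identity permutation of the points of `A`,
are then admissible witnesses for the infima defining `W∞` and `M∞`.
-/

theorem abs_dist_sub_dist_le_two_mul {X ι : Type*} [PseudoMetricSpace X] {x x' : ι → X}
    {ε : ℝ} (hx : ∀ i, dist (x i) (x' i) ≤ ε) (i j : ι) :
    |dist (x' i) (x' j) - dist (x i) (x j)| ≤ 2 * ε := by
  have := dist_dist_dist_le (x' i) (x' j) (x i) (x j)
  rw [Real.dist_eq, dist_comm (x' i) (x i), dist_comm (x' j) (x j)] at this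
  linarith [hx i, hx j]

section RDD

variable {h k : ℕ} {c : ℝ}

theorem Linf_le {D D' : Fin h → Fin h → ℝ} (hc : 0 ≤ c) (hDD' : ∀ i j, |D i j - D' i j| ≤ c) :
    Linf D D' ≤ c :=
  Real.iSup_le (fun i => Real.iSup_le (hDD' i) hc) hc

theorem Winf_le_of_forall_dist_le {R R' : Fin k → Fin h → ℝ} (hc : 0 ≤ c)
    (hRR' : ∀ j, dist (R j) (R' j) ≤ c) : Winf R R' ≤ c :=
  (ciInf_le (Set.finite_range _).bddBelow (Equiv.refl _)).trans (Real.iSup_le hRR' hc)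

theorem Minf_le_max_Linf_Winf (D D' : Fin h → Fin h → ℝ) (R R' : Fin k → Fin h → ℝ) :
    Minf D D' R R' ≤ max (Linf D D') (Winf R R') :=
  ciInf_le (Set.finite_range _).bddBelow (Equiv.refl _)

end RDD

theorem stmt8_general {X : Type*} [MetricSpace X] (m h : ℕ) (h2 : h < m)
    (ε : ℝ) (p p' : Fin m → X) (hpert : ∀ i, dist (p i) (p' i) ≤ ε)
    (ι : Fin h → Fin m)
    (κ : Fin (m - h) → Fin m)
    (D : Fin h → Fin h → ℝ) (hD : D = fun i j => dist (p (ι i)) (p (ι j)))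
    (D' : Fin h → Fin h → ℝ) (hD' : D' = fun i j => dist (p' (ι i)) (p' (ι j)))
    (R : Fin (m - h) → Fin h → ℝ) (hR : R = fun c i => dist (p (κ c)) (p (ι i)))
    (R' : Fin (m - h) → Fin h → ℝ) (hR' : R' = fun c i => dist (p' (κ c)) (p' (ι i))) :
    (∀ i j, |D' i j - D i j| ≤ 2 * ε) ∧
    Winf R R' ≤ 2 * ε ∧
    Minf D D' R R' ≤ 2 * ε := by
  have hε : 0 ≤ 2 * ε := by linarith [dist_nonneg.trans (hpert ⟨0, Nat.zero_lt_of_lt h2⟩)]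
  have hDD' : ∀ i j, |D' i j - D i j| ≤ 2 * ε := by
    subst hD hD'
    exact fun i j => abs_dist_sub_dist_le_two_mul hpert _ _
  have hW : Winf R R' ≤ 2 * ε := by
    refine Winf_le_of_forall_dist_le hε fun c => (dist_pi_le_iff hε).2 fun i => ?_
    subst hR hR'
    rw [Real.dist_eq, abs_sub_comm]
    exact abs_dist_sub_dist_le_two_mul hpert _ _
  refine ⟨hDD', hW, (Minf_le_max_Linf_Winf ..).trans (max_le (Linf_le hε fun i j => ?_) hW)⟩
  rw [abs_sub_comm]
  exact hDD' i j

/-- Let C' be obtained from an m-point cloud C = {p₁,…,p_m} in a metric space by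
perturbing each point within its ε-neighborhood (d(pᵢ,p'ᵢ) ≤ ε).  For the induced
bijection between h-point subsets (an h-tuple A of C, selected by ι, corresponds to
A' of C', with the complement C∖A enumerated by κ): every entry of D(A') differs
from the corresponding entry of D(A) by at most 2ε, the bottleneck distance between
the column sets of R(C;A) and R(C';A') is at most 2ε, and hence
M∞(RDD(C;A), RDD(C';A')) ≤ 2ε. -/
theorem stmt8 {X : Type*} [MetricSpace X] (m h : ℕ) (h1 : 1 ≤ h) (h2 : h < m)
    (ε : ℝ) (p p' : Fin m → X) (hpert : ∀ i, dist (p i) (p' i) ≤ ε)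
    (hpinj : Function.Injective p) (hp'inj : Function.Injective p')
    (ι : Fin h → Fin m) (hι : Function.Injective ι)
    (κ : Fin (m - h) → Fin m) (hκ : Function.Injective κ)
    (hdisj : ∀ j i, κ j ≠ ι i)
    (D : Fin h → Fin h → ℝ) (hD : D = fun i j => dist (p (ι i)) (p (ι j)))
    (D' : Fin h → Fin h → ℝ) (hD' : D' = fun i j => dist (p' (ι i)) (p' (ι j)))
    (R : Fin (m - h) → Fin h → ℝ) (hR : R = fun c i => dist (p (κ c)) (p (ι i)))
    (R' : Fin (m - h) → Fin h → ℝ) (hR' : R' = fun c i => dist (p' (κ c)) (p' (ι i))) :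
    (∀ i j, |D' i j - D i j| ≤ 2 * ε) ∧
    Winf R R' ≤ 2 * ε ∧
    Minf D D' R R' ≤ 2 * ε :=
  stmt8_general m h h2 ε p p' hpert ι κ D hD D' hD' R hR R' hR'
end
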